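/- arXiv:2309.07676 — 2 statements merged into one kernel-verified Lean document; each statement's English description precedes it below -/
import Mathlib

section
/- Let (V,H) ∈ Pav(d) with d ≥ 2. Then Fl(V,H) = P_{≤d−1}(V) ∪ { A ∈ P_d(V) : A ∪ {p} ∈ H for all p ∈ V \ A } ∪ { L : L is a maximal long hyperplane and a flat with |L ∩ L'| ≤ d−1 for every other maximal long hyperplane L' } ∪ {V}. -/
/-!
Since every subset of `V` with at most `d` points is a face, a set with fewer than `d` points
is a flat, and a `d`-set is a flat exactly when all its one-point extensions are faces. For a
proper flat `F` with more than `d` points, every `d`-subset of `F` plus a point outside `F` is a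
face of size `d + 1`, hence a facet. So `F` contains no facet (a proper flat never does), and
a long hyperplane meeting `F` in `d` points lies inside `F`; this makes `F` a maximal long
hyperplane meeting every other one in fewer than `d` points.
-/

variable {α : Type*} [DecidableEq α]

/-- A (finite) simplicial complex on vertex set `V`. -/
def IsComplex (V : Finset α) (H : Set (Finset α)) : Prop :=
  (∀ X ∈ H, X ⊆ V) ∧ (∀ v ∈ V, ({v} : Finset α) ∈ H) ∧
    (∀ X ∈ H, ∀ Y : Finset α, Y ⊆ X → Y ∈ H)

/-- A paving complex of dimension `d`. -/
def IsPav (V : Finset α) (H : Set (Finset α)) (d : ℕ) : Prop :=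
  IsComplex V H ∧ (∀ X : Finset α, X ⊆ V → X.card ≤ d → X ∈ H) ∧
    (∀ X ∈ H, X.card ≤ d + 1) ∧ (∃ X ∈ H, X.card = d + 1)

/-- A flat of `(V,H)`. -/
def IsFlat (V : Finset α) (H : Set (Finset α)) (F : Finset α) : Prop :=
  F ⊆ V ∧ ∀ X ∈ H, X ⊆ F → ∀ p ∈ V, p ∉ F → insert p X ∈ H

/-- A facet: a maximal face. -/
def IsFacet (H : Set (Finset α)) (B : Finset α) : Prop :=
  B ∈ H ∧ ∀ C ∈ H, B ⊆ C → C = B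

/-- A long hyperplane: a subset of `V` of size at least `d+1` containing no facet. -/
def LongHyp (V : Finset α) (H : Set (Finset α)) (d : ℕ) (X : Finset α) : Prop :=
  X ⊆ V ∧ d + 1 ≤ X.card ∧ ¬ ∃ B : Finset α, IsFacet H B ∧ B ⊆ X

/-- A maximal long hyperplane. -/
def MaxLongHyp (V : Finset α) (H : Set (Finset α)) (d : ℕ) (X : Finset α) : Prop :=
  LongHyp V H d X ∧ ∀ Y : Finset α, LongHyp V H d Y → X ⊆ Y → Y = X

section Flats

variable {V F : Finset α} {H : Set (Finset α)} {d : ℕ}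

omit [DecidableEq α] in
theorem IsPav.mem_of_card_le (hH : IsPav V H d) {X : Finset α} (hXV : X ⊆ V)
    (hX : X.card ≤ d) : X ∈ H :=
  hH.2.1 X hXV hX

omit [DecidableEq α] in
theorem IsPav.isFacet_of_card_eq (hH : IsPav V H d) {B : Finset α} (hB : B ∈ H)
    (hcard : B.card = d + 1) : IsFacet H B :=
  ⟨hB, fun C hC hBC => (Finset.eq_of_subset_of_card_le hBC (hcard ▸ hH.2.2.1 C hC)).symm⟩

theorem isFlat_self : IsFlat V H V :=
  ⟨subset_rfl, fun _ _ _ _ hp hpV => absurd hp hpV⟩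

theorem IsPav.isFlat_of_card_lt (hH : IsPav V H d) (hFV : F ⊆ V) (hF : F.card < d) :
    IsFlat V H F := by
  refine ⟨hFV, fun X _ hXF p hp _ =>
    hH.mem_of_card_le (Finset.insert_subset hp (hXF.trans hFV)) ?_⟩
  have := Finset.card_le_card hXF
  have := Finset.card_insert_le p X
  omega

theorem IsComplex.isFlat_of_forall_insert_mem (hH : IsComplex V H) (hFV : F ⊆ V)
    (hF : ∀ p ∈ V, p ∉ F → insert p F ∈ H) : IsFlat V H F :=
  ⟨hFV, fun _ _ hXF p hp hpF => hH.2.2 _ (hF p hp hpF) _ (Finset.insert_subset_insert p hXF)⟩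

theorem IsPav.insert_mem_of_isFlat (hH : IsPav V H d) (hF : IsFlat V H F) (hcard : F.card ≤ d)
    {p : α} (hp : p ∈ V) (hpF : p ∉ F) : insert p F ∈ H :=
  hF.2 F (hH.mem_of_card_le hF.1 hcard) subset_rfl p hp hpF

theorem IsFlat.not_isFacet_subset (hF : IsFlat V H F) (hFV : F ≠ V) {B : Finset α}
    (hB : IsFacet H B) : ¬ B ⊆ F := by
  intro hBF
  obtain ⟨p, hp, hpF⟩ := Finset.exists_of_ssubset (hF.1.ssubset_of_ne hFV)
  have hpB : insert p B = B := hB.2 _ (hF.2 B hB.1 hBF p hp hpF) (Finset.subset_insert p B)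
  exact hpF (hBF (hpB ▸ Finset.mem_insert_self p B))

theorem IsFlat.longHyp (hF : IsFlat V H F) (hFV : F ≠ V) (hcard : d < F.card) :
    LongHyp V H d F :=
  ⟨hF.1, hcard, fun ⟨_, hB, hBF⟩ => hF.not_isFacet_subset hFV hB hBF⟩

theorem IsPav.isFacet_insert_of_isFlat (hH : IsPav V H d) (hF : IsFlat V H F) {X : Finset α}
    (hXF : X ⊆ F) (hX : X.card = d) {p : α} (hp : p ∈ V) (hpF : p ∉ F) :
    IsFacet H (insert p X) := by
  refine hH.isFacet_of_card_eq (hF.2 X (hH.mem_of_card_le (hXF.trans hF.1) hX.le) hXF p hp hpF) ?_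
  rw [Finset.card_insert_of_notMem fun hpX => hpF (hXF hpX), hX]

theorem IsPav.subset_of_isFlat_of_longHyp (hH : IsPav V H d) (hF : IsFlat V H F)
    {Y : Finset α} (hY : LongHyp V H d Y) {X : Finset α} (hXF : X ⊆ F) (hXY : X ⊆ Y)
    (hX : X.card = d) : Y ⊆ F := by
  intro p hpY
  by_contra hpF
  exact hY.2.2 ⟨insert p X, hH.isFacet_insert_of_isFlat hF hXF hX (hY.1 hpY) hpF,
    Finset.insert_subset hpY hXY⟩

theorem IsPav.maxLongHyp_of_isFlat (hH : IsPav V H d) (hF : IsFlat V H F) (hFV : F ≠ V)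
    (hcard : d < F.card) : MaxLongHyp V H d F := by
  refine ⟨hF.longHyp hFV hcard, fun Y hY hFY => ?_⟩
  obtain ⟨X, hXF, hX⟩ := Finset.exists_subset_card_eq hcard.le
  exact (hH.subset_of_isFlat_of_longHyp hF hY hXF (hXF.trans hFY) hX).antisymm hFY

theorem IsPav.card_inter_lt_of_isFlat (hH : IsPav V H d) (hF : IsFlat V H F)
    (hFL : LongHyp V H d F) {L : Finset α} (hL : MaxLongHyp V H d L) (hLF : L ≠ F) :
    (F ∩ L).card < d := by
  by_contra! hcard
  obtain ⟨X, hX, hXcard⟩ := Finset.exists_subset_card_eq hcard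
  have hLsubF := hH.subset_of_isFlat_of_longHyp hF hL.1 (hX.trans Finset.inter_subset_left)
    (hX.trans Finset.inter_subset_right) hXcard
  exact hLF (hL.2 F hFL hLsubF).symm

end Flats

theorem flats_of_pav_general (V : Finset α) (H : Set (Finset α)) (d : ℕ) (hd : 2 ≤ d)
    (hH : IsPav V H d) :
    {F : Finset α | IsFlat V H F} =
      {F : Finset α | F ⊆ V ∧ F.card ≤ d - 1} ∪
        {A : Finset α | A ⊆ V ∧ A.card = d ∧ ∀ p ∈ V, p ∉ A → insert p A ∈ H} ∪
        {L : Finset α | MaxLongHyp V H d L ∧ IsFlat V H L ∧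
          ∀ L' : Finset α, MaxLongHyp V H d L' → L' ≠ L → (L ∩ L').card ≤ d - 1} ∪
        ({V} : Set (Finset α)) := by
  ext F
  simp only [Set.mem_ofPred_eq, Set.mem_union, Set.mem_singleton_iff]
  constructor
  · intro hF
    by_cases hFV : F = V
    · exact .inr hFV
    rcases lt_trichotomy F.card d with hlt | heq | hgt
    · exact .inl (.inl (.inl ⟨hF.1, by omega⟩))
    · exact .inl (.inl (.inr ⟨hF.1, heq, fun p hp hpF =>
        hH.insert_mem_of_isFlat hF heq.le hp hpF⟩))
    · refine .inl (.inr ⟨hH.maxLongHyp_of_isFlat hF hFV hgt, hF, fun L hL hLF => ?_⟩)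
      have := hH.card_inter_lt_of_isFlat hF (hF.longHyp hFV hgt) hL hLF
      omega
  · rintro (((⟨hFV, hcard⟩ | ⟨hFV, -, hins⟩) | ⟨-, hF, -⟩) | rfl)
    · exact hH.isFlat_of_card_lt hFV (by omega)
    · exact hH.1.isFlat_of_forall_insert_mem hFV hins
    · exact hF
    · exact isFlat_self

/-- Description of the flats of a paving complex of dimension `d ≥ 2`:
`Fl(V,H) = P_{≤d−1}(V) ∪ {A ∈ P_d(V) : A ∪ {p} ∈ H for all p ∈ V \ A}
∪ 𝓛^{(1)} ∪ {V}`, where `𝓛^{(1)}` consists of the maximal long hyperplanes which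
are flats and meet every other maximal long hyperplane in at most `d−1` points. -/
theorem flats_of_pav (V : Finset α) (H : Set (Finset α)) (d : ℕ) (hd : 2 ≤ d)
    (hV : V.Nonempty) (hH : IsPav V H d) :
    {F : Finset α | IsFlat V H F} =
      {F : Finset α | F ⊆ V ∧ F.card ≤ d - 1} ∪
        {A : Finset α | A ⊆ V ∧ A.card = d ∧ ∀ p ∈ V, p ∉ A → insert p A ∈ H} ∪
        {L : Finset α | MaxLongHyp V H d L ∧ IsFlat V H L ∧
          ∀ L' : Finset α, MaxLongHyp V H d L' → L' ≠ L → (L ∩ L').card ≤ d - 1} ∪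
        ({V} : Set (Finset α)) :=
  flats_of_pav_general V H d hd hH
end

section
/- A simplicial complex (V,H) is a matroid if and only if for all X, Y ∈ H, equality of closures cl(X) = cl(Y) (in the lattice of flats) implies |X| = |Y|. -/
/-!
For a face `B`, call `a` *spanned* by `B` if `a ∈ B` or `insert a B` is not a face. Spanned points
always lie in `cl(B)`. Under exchange, a face spanned by `B` is no larger than `B`, and the spanned
points of `B` form a flat, so `cl(B)` is exactly the set of spanned points; this gives `|X| = |Y|`
whenever `cl(X) = cl(Y)`. Conversely, if exchange fails for faces `I`, `J` with `|I| = |J| + 1`,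
then `I ⊆ cl(J)`; extending `I` to a maximal face `I'` inside `cl(J)` gives `cl(I') = cl(J)` but
`|I'| > |J|`.
-/

variable {α : Type*} [DecidableEq α]

/-- The exchange property. -/
def HasExchange (H : Set (Finset α)) : Prop :=
  ∀ I ∈ H, ∀ J ∈ H, I.card = J.card + 1 → ∃ i ∈ I, i ∉ J ∧ insert i J ∈ H

/-- `z` belongs to the closure of `X` in the lattice of flats of `(V,H)`. -/
def inCl (V : Finset α) (H : Set (Finset α)) (X : Finset α) (z : α) : Prop :=
  ∀ F : Finset α, IsFlat V H F → X ⊆ F → z ∈ F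

open Finset

def InSpan (H : Set (Finset α)) (B : Finset α) (a : α) : Prop :=
  a ∈ B ∨ insert a B ∉ H

section

variable {V : Finset α} {H : Set (Finset α)} {X Y : Finset α} {z : α}

lemma inCl_of_mem (hz : z ∈ X) : inCl V H X z :=
  fun _ _ hXF => hXF hz

lemma inCl_of_inSpan (hY : Y ∈ H) (hzV : z ∈ V) (hz : InSpan H Y z) : inCl V H Y z := by
  rcases hz with hzY | hdep
  · exact inCl_of_mem hzY
  · intro F hF hYF
    by_contra hzF
    exact hdep (hF.2 Y hY hYF z hzV hzF)

lemma inCl_of_forall_inCl (hXY : ∀ x ∈ X, inCl V H Y x) (hz : inCl V H X z) :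
    inCl V H Y z :=
  fun F hF hYF => hz F hF fun x hx => hXY x hx F hF hYF

end

lemma exists_face_between_forall_inSpan {H : Set (Finset α)} {I S : Finset α} (hI : I ∈ H)
    (hIS : I ⊆ S) : ∃ B ∈ H, I ⊆ B ∧ B ⊆ S ∧ ∀ z ∈ S, InSpan H B z := by
  classical
  obtain ⟨B, hB, hmax⟩ := (S.powerset.filter fun B => B ∈ H ∧ I ⊆ B).exists_max_image card
    ⟨I, mem_filter.2 ⟨mem_powerset.2 hIS, hI, subset_rfl⟩⟩
  obtain ⟨hBS, hBH, hIB⟩ : B ⊆ S ∧ B ∈ H ∧ I ⊆ B := by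
    simpa only [mem_filter, mem_powerset] using hB
  refine ⟨B, hBH, hIB, hBS, fun z hzS => or_iff_not_imp_left.2 fun hzB hzB' => ?_⟩
  have := hmax (insert z B) (mem_filter.2
    ⟨mem_powerset.2 (insert_subset hzS hBS), hzB', hIB.trans (subset_insert z B)⟩)
  rw [card_insert_of_notMem hzB] at this
  omega

section Exchange

variable {H : Set (Finset α)} (hH : IsLowerSet H) (hEx : HasExchange H)
include hH hEx

lemma card_le_card_of_forall_inSpan {A B : Finset α} (hA : A ∈ H) (hB : B ∈ H)
    (hAB : ∀ a ∈ A, InSpan H B a) : #A ≤ #B := by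
  by_contra! hlt
  obtain ⟨A', hA'A, hA'⟩ := exists_subset_card_eq (n := #B + 1) hlt
  obtain ⟨a, ha, haB, haB'⟩ := hEx A' (hH hA'A hA) B hB hA'
  exact (hAB a (hA'A ha)).elim haB (· haB')

lemma insert_mem_of_forall_inSpan {W Y : Finset α} {p : α} (hW : W ∈ H)
    (hWY : ∀ w ∈ W, InSpan H Y w) (hpY : p ∉ Y) (hpY' : insert p Y ∈ H) : insert p W ∈ H := by
  -- a maximal face `B` of `W ∪ Y` containing `W` spans `Y` and is spanned by it: `|B| = |Y|`
  have hY : Y ∈ H := hH (subset_insert p Y) hpY'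
  obtain ⟨B, hB, hWB, hBWY, hBspan⟩ := exists_face_between_forall_inSpan hW subset_union_left
  have hYB : ∀ y ∈ Y, InSpan H B y := fun y hy => hBspan y (mem_union_right W hy)
  have hBY : ∀ b ∈ B, InSpan H Y b := fun b hb =>
    (mem_union.1 (hBWY hb)).elim (hWY b) Or.inl
  have hcard : #(insert p Y) = #B + 1 := by
    rw [card_insert_of_notMem hpY, le_antisymm (card_le_card_of_forall_inSpan hH hEx hB hY hBY)
      (card_le_card_of_forall_inSpan hH hEx hY hB hYB)]
  obtain ⟨i, hi, hiB, hiB'⟩ := hEx _ hpY' B hB hcard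
  obtain rfl : i = p :=
    (mem_insert.1 hi).resolve_right fun hiY => (hYB i hiY).elim hiB (· hiB')
  exact hH (insert_subset_insert i hWB) hiB'

end Exchange

section Matroid

variable {V : Finset α} {H : Set (Finset α)} {X Y : Finset α}

omit [DecidableEq α] in
lemma IsComplex.isLowerSet (hH : IsComplex V H) : IsLowerSet H :=
  fun _ Y hYX hX => hH.2.2 _ hX Y hYX

lemma inSpan_of_inCl (hH : IsComplex V H) (hEx : HasExchange H) (hY : Y ∈ H) {x : α}
    (hx : inCl V H Y x) : InSpan H Y x := by
  classical
  have hflat : IsFlat V H (V.filter (InSpan H Y)) := by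
    refine ⟨filter_subset _ _, fun W hW hWF p hpV hpF => ?_⟩
    obtain ⟨hpY, hpY'⟩ : p ∉ Y ∧ insert p Y ∈ H := by
      simpa only [mem_filter, hpV, InSpan, true_and, not_or, not_not] using hpF
    exact insert_mem_of_forall_inSpan hH.isLowerSet hEx hW
      (fun w hw => (mem_filter.1 (hWF hw)).2) hpY hpY'
  exact (mem_filter.1 (hx _ hflat fun y hy => mem_filter.2 ⟨hH.1 Y hY hy, Or.inl hy⟩)).2

lemma card_le_card_of_forall_inCl (hH : IsComplex V H) (hEx : HasExchange H) (hX : X ∈ H)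
    (hY : Y ∈ H) (hXY : ∀ x ∈ X, inCl V H Y x) : #X ≤ #Y :=
  card_le_card_of_forall_inSpan hH.isLowerSet hEx hX hY fun x hx =>
    inSpan_of_inCl hH hEx hY (hXY x hx)

lemma exists_superset_inCl_iff (hX : X ∈ H) (hXV : X ⊆ V) (hYV : Y ⊆ V)
    (hXY : ∀ x ∈ X, inCl V H Y x) : ∃ X' ∈ H, X ⊆ X' ∧ ∀ z, inCl V H X' z ↔ inCl V H Y z := by
  classical
  obtain ⟨B, hB, hXB, hBcl, hclB⟩ := exists_face_between_forall_inSpan hX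
    (S := V.filter (inCl V H Y)) fun x hx => mem_filter.2 ⟨hXV hx, hXY x hx⟩
  have hYB : ∀ y ∈ Y, inCl V H B y := fun y hy =>
    inCl_of_inSpan hB (hYV hy) (hclB y (mem_filter.2 ⟨hYV hy, inCl_of_mem hy⟩))
  exact ⟨B, hB, hXB, fun z =>
    ⟨inCl_of_forall_inCl fun b hb => (mem_filter.1 (hBcl hb)).2, inCl_of_forall_inCl hYB⟩⟩

end Matroid

theorem matroid_iff_closure_card_general (V : Finset α) (H : Set (Finset α))
    (hH : IsComplex V H) :
    HasExchange H ↔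
      ∀ X ∈ H, ∀ Y ∈ H,
        (∀ z : α, inCl V H X z ↔ inCl V H Y z) → X.card = Y.card := by
  constructor
  · intro hEx X hX Y hY hXY
    exact le_antisymm
      (card_le_card_of_forall_inCl hH hEx hX hY fun x hx => (hXY x).1 (inCl_of_mem hx))
      (card_le_card_of_forall_inCl hH hEx hY hX fun y hy => (hXY y).2 (inCl_of_mem hy))
  · intro hcard I hI J hJ hIJ
    by_contra! hno
    have hIclJ : ∀ i ∈ I, inCl V H J i := fun i hi =>
      inCl_of_inSpan hJ (hH.1 I hI hi) (or_iff_not_imp_left.2 (hno i hi))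
    obtain ⟨I', hI', hII', hcl⟩ :=
      exists_superset_inCl_iff hI (hH.1 I hI) (hH.1 J hJ) hIclJ
    have := hcard I' hI' J hJ hcl
    have := card_le_card hII'
    omega

/-- A simplicial complex is a matroid if and only if for all faces `X, Y`,
`cl(X) = cl(Y)` implies `|X| = |Y|`. -/
theorem matroid_iff_closure_card (V : Finset α) (H : Set (Finset α))
    (hV : V.Nonempty) (hH : IsComplex V H) :
    HasExchange H ↔
      ∀ X ∈ H, ∀ Y ∈ H,
        (∀ z : α, inCl V H X z ↔ inCl V H Y z) → X.card = Y.card :=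
  matroid_iff_closure_card_general V H hH
end
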